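/- Let (ℓ_k)_{k≥0} ⊆ ℕ₀. The following are equivalent: (1) for every positive real sequence (s_k)_{k≥0}, the subsequence (s̃_k)_{k≥0} given by s̃_k = s_{k+ℓ_k} is positive; (2) there exist d ∈ ℕ₀ and an even natural number ℓ₀ such that ℓ_k = k·d + ℓ₀ for all k ≥ 0. -/

import Mathlib

/-!
Extracting `s_{k + ℓ_k}` with `ℓ_k = k d + 2e` is the same as restricting the Hankel form of `s`
to the rows `i (d + 1) + e`, which preserves positivity.

Conversely, testing the hypothesis on `s_k = (-1)^k` forces `ℓ_0` to be even, and testing it on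
`s_k = t^k` for `t = 2` and `t = 1/2` turns the `2 × 2` minor inequality
`s̃_{i+j}^2 ≤ s̃_{2i} s̃_{2j}` into the equation `2 ℓ_{i+j} = ℓ_{2i} + ℓ_{2j}`, whose solutions in `ℕ`
are exactly the arithmetic progressions `ℓ_k = k d + ℓ_0` with `d ≥ 0`.
-/

open Finset

/-- A real sequence `s` is positive if all its Hankel quadratic forms are nonnegative. -/
def IsPosSeq (s : ℕ → ℝ) : Prop :=
  ∀ (m : ℕ) (x : ℕ → ℝ),
    0 ≤ ∑ i ∈ Finset.range (m + 1), ∑ j ∈ Finset.range (m + 1), x i * x j * s (i + j)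

lemma sum_fiberwise_mul_of_maps_to {ι κ R : Type*} [DecidableEq κ] [NonUnitalNonAssocSemiring R]
    {S : Finset ι} {t : Finset κ} {φ : ι → κ} (hφ : ∀ i ∈ S, φ i ∈ t) (x : ι → R) (g : κ → R) :
    ∑ n ∈ t, (∑ i ∈ S with φ i = n, x i) * g n = ∑ i ∈ S, x i * g (φ i) := by
  rw [← sum_fiberwise_of_maps_to hφ]
  refine sum_congr rfl fun n _ => ?_
  rw [sum_mul]
  exact sum_congr rfl fun i hi => by rw [(mem_filter.1 hi).2]

namespace IsPosSeq

variable {s : ℕ → ℝ}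

lemma sum_sum_comp_nonneg (hs : IsPosSeq s) (φ : ℕ → ℕ) (m : ℕ) (x : ℕ → ℝ) :
    0 ≤ ∑ i ∈ range (m + 1), ∑ j ∈ range (m + 1), x i * x j * s (φ i + φ j) := by
  set M := (range (m + 1)).sup φ
  have hφ : ∀ i ∈ range (m + 1), φ i ∈ range (M + 1) := fun i hi =>
    mem_range.2 (Nat.lt_succ_of_le (le_sup hi))
  -- `y` is the pushforward of `x` along `φ`.
  set y : ℕ → ℝ := fun n => ∑ i ∈ range (m + 1) with φ i = n, x i
  have hy := sum_fiberwise_mul_of_maps_to hφ x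
  calc (0 : ℝ) ≤ ∑ n ∈ range (M + 1), ∑ n' ∈ range (M + 1), y n * y n' * s (n + n') := hs M y
    _ = ∑ n ∈ range (M + 1), y n * ∑ j ∈ range (m + 1), x j * s (n + φ j) := by
      refine sum_congr rfl fun n _ => ?_
      rw [← hy fun n' => s (n + n'), mul_sum]
      exact sum_congr rfl fun n' _ => by ring
    _ = ∑ i ∈ range (m + 1), x i * ∑ j ∈ range (m + 1), x j * s (φ i + φ j) := hy _
    _ = _ := by simp only [mul_sum, mul_assoc]

lemma comp_mul_add_two_mul (hs : IsPosSeq s) (c e : ℕ) :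
    IsPosSeq fun k => s (c * k + 2 * e) := by
  intro m x
  convert hs.sum_sum_comp_nonneg (fun i => c * i + e) m x using 4 with i _ j _
  ring_nf

lemma apply_zero_nonneg (hs : IsPosSeq s) : 0 ≤ s 0 := by
  simpa using hs 0 1

lemma sq_le_mul (hs : IsPosSeq s) (i j : ℕ) : s (i + j) ^ 2 ≤ s (2 * i) * s (2 * j) := by
  have hquad : ∀ α : ℝ, 0 ≤ s (2 * i) * (α * α) + 2 * s (i + j) * α + s (2 * j) := fun α => by
    have h := hs.sum_sum_comp_nonneg (fun n => if n = 0 then i else j) 1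
      (fun n => if n = 0 then α else 1)
    simp only [sum_range_succ, sum_range_zero] at h
    norm_num [add_comm j i] at h
    rw [two_mul i, two_mul j]
    linarith
  have := discrim_le_zero hquad
  rw [discrim] at this
  linarith

end IsPosSeq

lemma isPosSeq_pow (t : ℝ) : IsPosSeq fun k => t ^ k := by
  intro m x
  have hsq : ∑ i ∈ range (m + 1), ∑ j ∈ range (m + 1), x i * x j * t ^ (i + j)
      = (∑ i ∈ range (m + 1), x i * t ^ i) ^ 2 := by
    rw [sq, sum_mul_sum]
    exact sum_congr rfl fun i _ => sum_congr rfl fun j _ => by ring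
  exact hsq ▸ sq_nonneg _

lemma Nat.eq_of_forall_pow_le_pow {a b : ℕ} (h : ∀ t : ℝ, 0 < t → t ^ a ≤ t ^ b) : a = b :=
  le_antisymm ((pow_le_pow_iff_right₀ one_lt_two).1 (h 2 two_pos))
    ((pow_le_pow_iff_right_of_lt_one₀ (by norm_num) (by norm_num)).1 (h (1 / 2) (by norm_num)))

lemma two_mul_apply_add_of_isPosSeq_pow {f : ℕ → ℕ}
    (hf : ∀ t : ℝ, 0 < t → IsPosSeq fun k => t ^ f k) (i j : ℕ) :
    2 * f (i + j) = f (2 * i) + f (2 * j) :=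
  Nat.eq_of_forall_pow_le_pow fun t ht => by
    simpa only [← pow_mul, mul_comm _ 2, ← pow_add] using (hf t ht).sq_le_mul i j

lemma exists_eq_mul_add_of_two_mul_apply_add {g : ℕ → ℕ}
    (hg : ∀ i j, 2 * g (i + j) = g (2 * i) + g (2 * j)) : ∃ d, ∀ k, g k = k * d + g 0 := by
  have hcauchy : ∀ i j, g (i + j) + g 0 = g i + g j := fun i j => by
    have hi := hg i 0
    have hj := hg 0 j
    simp only [mul_zero, add_zero, zero_add] at hi hj
    have := hg i j
    omega
  have haffine : ∀ k, (g k : ℤ) = g 0 + k * ((g 1 : ℤ) - g 0) := fun k => by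
    induction k with
    | zero => simp
    | succ k ih => have := hcauchy k 1; push_cast; linarith
  have hmono : g 0 ≤ g 1 := by
    -- otherwise `g (g 0 + 1)` would be negative
    by_contra! hlt
    have := haffine (g 0 + 1)
    push_cast at this
    nlinarith
  exact ⟨g 1 - g 0, fun k => by have := haffine k; zify [hmono]; linarith⟩

/-- A subsequence extraction pattern `(ℓ_k) ⊆ ℕ₀` sends every positive sequence `s` to a
positive subsequence `s̃_k = s_{k + ℓ_k}` if and only if `ℓ_k = k d + ℓ₀` for some
`d ∈ ℕ₀` and some even `ℓ₀ ∈ ℕ₀`. Equivalently, this characterizes completability of the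
corresponding partial Hankel matrices. -/
theorem subsequence_posSeq_iff_arithmetic (ℓ : ℕ → ℕ) :
    (∀ s : ℕ → ℝ, IsPosSeq s → IsPosSeq fun k => s (k + ℓ k)) ↔
      ∃ d ℓ₀ : ℕ, Even ℓ₀ ∧ ∀ k : ℕ, ℓ k = k * d + ℓ₀ := by
  constructor
  · intro h
    have heven : Even (ℓ 0) := by
      have hnonneg : 0 ≤ (-1 : ℝ) ^ (0 + ℓ 0) := (h _ (isPosSeq_pow (-1))).apply_zero_nonneg
      rcases (ℓ 0).even_or_odd with heven | hodd
      · exact heven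
      · norm_num [hodd.neg_one_pow] at hnonneg
    have hmid : ∀ i j, 2 * ℓ (i + j) = ℓ (2 * i) + ℓ (2 * j) := fun i j => by
      have := two_mul_apply_add_of_isPosSeq_pow (f := fun k => k + ℓ k)
        (fun t _ => h _ (isPosSeq_pow t)) i j
      omega
    obtain ⟨d, hd⟩ := exists_eq_mul_add_of_two_mul_apply_add hmid
    exact ⟨d, ℓ 0, heven, hd⟩
  · rintro ⟨d, ℓ₀, ⟨e, rfl⟩, hℓ⟩ s hs
    convert hs.comp_mul_add_two_mul (d + 1) e using 3 with k
    rw [hℓ]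
    ring
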